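/- arXiv:math/0007029 — 2 statements merged into one kernel-verified Lean document; each statement's English description precedes it below -/
import Mathlib

section
/- Let Λ be a k-graph, λ ∈ Λ and x ∈ Λ^∞ with x(0) = s(λ). Then there is a unique y ∈ Λ^∞ such that x = σ^{d(λ)}(y) and y(0, d(λ)) = λ, where σ^p(x)(m,n) := x(m+p, n+p). -/
open CategoryTheory

universe v u

/-- A `k`-graph structure: a degree functor `d : Λ → ℕ^k` satisfying the unique
factorisation property.  Here a morphism `f : a ⟶ b` has range `r f = a` and
source `s f = b`, so that composition `f ≫ g` corresponds to the paper's `λμ`. -/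
class KGraph (k : ℕ) (Λ : Type u) [Category.{v} Λ] where
  d : ∀ {a b : Λ}, (a ⟶ b) → (Fin k → ℕ)
  d_id : ∀ a : Λ, d (𝟙 a) = 0
  d_comp : ∀ {a b c : Λ} (f : a ⟶ b) (g : b ⟶ c), d (f ≫ g) = d f + d g
  factor : ∀ {a b : Λ} (f : a ⟶ b) (m n : Fin k → ℕ), d f = m + n →
    ∃! t : Σ c : Λ, (a ⟶ c) × (c ⟶ b),
      d t.2.1 = m ∧ d t.2.2 = n ∧ t.2.1 ≫ t.2.2 = f

variable (k : ℕ) (Λ : Type u) [Category.{v} Λ] [KGraph k Λ]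

/-- An infinite path in a `k`-graph `Λ`: a degree-preserving functor from
`Ω_k = {(m,n) ∈ ℕ^k × ℕ^k : m ≤ n}` to `Λ`.  `vert m` is the image `x(m)` of the
object `m`, and `edge m n h` is the image `x(m,n)` of the morphism `(m,n)`. -/
structure InfPath where
  vert : (Fin k → ℕ) → Λ
  edge : ∀ m n : Fin k → ℕ, m ≤ n → (vert m ⟶ vert n)
  edge_self : ∀ m, edge m m le_rfl = 𝟙 (vert m)
  edge_comp : ∀ m n p (h₁ : m ≤ n) (h₂ : n ≤ p),
    edge m n h₁ ≫ edge n p h₂ = edge m p (h₁.trans h₂)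
  deg : ∀ m n (h : m ≤ n), KGraph.d (k := k) (edge m n h) = n - m

variable {k Λ}

/-- The shift map `σ^p` on infinite paths: `σ^p(x)(m,n) = x(m+p, n+p)`. -/
def InfPath.shift (x : InfPath k Λ) (p : Fin k → ℕ) : InfPath k Λ where
  vert m := x.vert (m + p)
  edge m n h := x.edge (m + p) (n + p) (add_le_add h le_rfl)
  edge_self m := x.edge_self (m + p)
  edge_comp m n q h₁ h₂ := x.edge_comp _ _ _ _ _
  deg m n h := by
    rw [x.deg]
    funext i
    simp [Nat.add_sub_add_right]

/-! Unique factorisation makes every morphism of a `k`-graph left-cancellable, so an infinite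
path `y` is determined by its segments `y(0, m)`, and any coherent family of morphisms of degree
`m` out of a fixed object is the family of segments of a path. For `λx` take as `y(0, m)` the
initial factor of degree `m` of `λ x(0, m)`. Conversely, any `y` with `σ^{d(λ)} y = x` and
`y(0, d(λ)) = λ` satisfies `y(0, m) y(m, m + d(λ)) = λ x(0, m)`, so its segments are forced. -/

namespace KGraph

variable {a b c c' : Λ}

theorem factor_eq {f : a ⟶ c} {g : c ⟶ b} {f' : a ⟶ c'} {g' : c' ⟶ b}
    (hfg : f ≫ g = f' ≫ g') (hd : d (k := k) f = d (k := k) f') :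
    ∃ h : c = c', f ≫ eqToHom h = f' ∧ g = eqToHom h ≫ g' := by
  have hdg : d (k := k) g' = d (k := k) g := by
    have := congrArg (d (k := k)) hfg
    rw [d_comp, d_comp, hd] at this
    exact (add_left_cancel this).symm
  have := (factor (k := k) (f ≫ g) (d (k := k) f) (d (k := k) g) (d_comp f g)).unique
    (y₁ := ⟨c, f, g⟩) (y₂ := ⟨c', f', g'⟩) ⟨rfl, rfl, rfl⟩ ⟨hd.symm, hdg, hfg.symm⟩
  obtain ⟨rfl, hfg'⟩ := Sigma.mk.inj_iff.mp this
  obtain ⟨rfl, rfl⟩ := (Prod.mk.injEq _ _ _ _).mp (eq_of_heq hfg')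
  exact ⟨rfl, by simp, by simp⟩

theorem d_eqToHom (h : a = b) : d (k := k) (eqToHom h) = 0 := by
  subst h; exact d_id a

theorem epi (k : ℕ) [KGraph k Λ] {a b : Λ} (f : a ⟶ b) : Epi f :=
  ⟨fun g g' h => by
    obtain ⟨_, -, hg⟩ := factor_eq (k := k) h rfl
    simpa using hg⟩

theorem exists_comp_eq_of_le {g : a ⟶ c} {u : c ⟶ b} {g' : a ⟶ c'} {u' : c' ⟶ b}
    (h : g ≫ u = g' ≫ u') (hd : d (k := k) g ≤ d (k := k) g') : ∃ e : c ⟶ c', g ≫ e = g' := by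
  obtain ⟨⟨c'', t₁, t₂⟩, ht₁, -, ht⟩ :=
    (factor (k := k) g' (d (k := k) g) (d (k := k) g' - d (k := k) g)
      (add_tsub_cancel_of_le hd).symm).exists
  obtain ⟨hc, hgt, -⟩ := factor_eq (k := k) (f' := t₁) (g' := t₂ ≫ u')
    (by rw [h, ← ht, Category.assoc]) ht₁.symm
  exact ⟨eqToHom hc ≫ t₂, by rw [← Category.assoc, hgt, ht]⟩

end KGraph

namespace InfPath

theorem edge_comp_eqToHom (x : InfPath k Λ) {m n n' : Fin k → ℕ} (hn : n = n') (h : m ≤ n) :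
    x.edge m n h ≫ eqToHom (congrArg x.vert hn) = x.edge m n' (hn ▸ h) := by
  subst hn; simp

theorem ext_of_edge_zero {y y' : InfPath k Λ} (hv : y.vert = y'.vert)
    (he : ∀ m, y.edge 0 m zero_le ≫ eqToHom (congrFun hv m) =
      eqToHom (congrFun hv 0) ≫ y'.edge 0 m zero_le) : y = y' := by
  cases y with | mk v e _ he_comp _ =>
  cases y' with | mk v' e' _ he_comp' _ =>
  obtain rfl : v = v' := hv
  simp only [eqToHom_refl, Category.comp_id, Category.id_comp] at he
  have : e = e' := by
    funext m n h
    refine (KGraph.epi k (e 0 m zero_le)).left_cancellation _ _ ?_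
    rw [he_comp, he, he m, he_comp']
  subst this
  rfl

section OfPrefixes

variable {a : Λ} (c : (Fin k → ℕ) → Λ) (g : ∀ m, a ⟶ c m)

noncomputable def ofPrefixes (hg : ∀ m, KGraph.d (k := k) (g m) = m)
    (hpre : ∀ m n, m ≤ n → ∃ e : c m ⟶ c n, g m ≫ e = g n) : InfPath k Λ where
  vert := c
  edge m n h := (hpre m n h).choose
  edge_self m := (KGraph.epi k (g m)).left_cancellation _ _ <| by
    rw [(hpre m m le_rfl).choose_spec, Category.comp_id]
  edge_comp m n q h₁ h₂ := (KGraph.epi k (g m)).left_cancellation _ _ <| by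
    rw [← Category.assoc, (hpre m n h₁).choose_spec, (hpre n q h₂).choose_spec,
      (hpre m q (h₁.trans h₂)).choose_spec]
  deg m n h := by
    have := congrArg (KGraph.d (k := k)) (hpre m n h).choose_spec
    rw [KGraph.d_comp, hg, hg] at this
    exact eq_tsub_of_add_eq ((add_comm _ _).trans this)

theorem prefix_comp_ofPrefixes_edge (hg : ∀ m, KGraph.d (k := k) (g m) = m)
    (hpre : ∀ m n, m ≤ n → ∃ e : c m ⟶ c n, g m ≫ e = g n) {m n : Fin k → ℕ} (h : m ≤ n) :
    g m ≫ (ofPrefixes c g hg hpre).edge m n h = g n :=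
  (hpre m n h).choose_spec

end OfPrefixes

section Cons

variable {a b : Λ} (lam : a ⟶ b) (x : InfPath k Λ) (hx : x.vert 0 = b)

def consSeg (m : Fin k → ℕ) : a ⟶ x.vert m :=
  lam ≫ eqToHom hx.symm ≫ x.edge 0 m zero_le

theorem consSeg_comp_edge {m n : Fin k → ℕ} (h : m ≤ n) :
    consSeg lam x hx m ≫ x.edge m n h = consSeg lam x hx n := by
  simp only [consSeg, Category.assoc, x.edge_comp]

theorem d_consSeg (m : Fin k → ℕ) :
    KGraph.d (k := k) (consSeg lam x hx m) = m + KGraph.d (k := k) lam := by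
  rw [consSeg, KGraph.d_comp, KGraph.d_comp, KGraph.d_eqToHom, x.deg, zero_add, tsub_zero,
    add_comm]

noncomputable def consFactor (m : Fin k → ℕ) : Σ c : Λ, (a ⟶ c) × (c ⟶ x.vert m) :=
  (KGraph.factor (consSeg lam x hx m) m _ (d_consSeg lam x hx m)).exists.choose

theorem d_consFactor (m : Fin k → ℕ) : KGraph.d (k := k) (consFactor lam x hx m).2.1 = m :=
  (KGraph.factor (consSeg lam x hx m) m _ (d_consSeg lam x hx m)).exists.choose_spec.1

theorem consFactor_comp (m : Fin k → ℕ) :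
    (consFactor lam x hx m).2.1 ≫ (consFactor lam x hx m).2.2 = consSeg lam x hx m :=
  (KGraph.factor (consSeg lam x hx m) m _ (d_consSeg lam x hx m)).exists.choose_spec.2.2

/-- The path `λx`. -/
noncomputable def cons : InfPath k Λ :=
  ofPrefixes (fun m => (consFactor lam x hx m).1) (fun m => (consFactor lam x hx m).2.1)
    (d_consFactor lam x hx) fun m n h =>
      KGraph.exists_comp_eq_of_le (u := (consFactor lam x hx m).2.2 ≫ x.edge m n h)
        (u' := (consFactor lam x hx n).2.2)
        (by rw [← Category.assoc, consFactor_comp, consSeg_comp_edge, consFactor_comp])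
        (by rwa [d_consFactor, d_consFactor])

noncomputable def consPrefix (m : Fin k → ℕ) : a ⟶ (cons lam x hx).vert m :=
  (consFactor lam x hx m).2.1

theorem d_consPrefix (m : Fin k → ℕ) : KGraph.d (k := k) (consPrefix lam x hx m) = m :=
  d_consFactor lam x hx m

theorem consPrefix_comp (m : Fin k → ℕ) :
    consPrefix lam x hx m ≫ (consFactor lam x hx m).2.2 = consSeg lam x hx m :=
  consFactor_comp lam x hx m

theorem consPrefix_comp_edge {m n : Fin k → ℕ} (h : m ≤ n) :
    consPrefix lam x hx m ≫ (cons lam x hx).edge m n h = consPrefix lam x hx n :=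
  prefix_comp_ofPrefixes_edge (fun m => (consFactor lam x hx m).1)
    (fun m => (consFactor lam x hx m).2.1) _ _ h

theorem consPrefix_eq_of_add_eq {m n : Fin k → ℕ} (hmn : m + KGraph.d (k := k) lam = n) :
    ∃ h : (cons lam x hx).vert n = x.vert m,
      consPrefix lam x hx n = consSeg lam x hx m ≫ eqToHom h.symm := by
  obtain ⟨h, hG, -⟩ := KGraph.factor_eq (k := k) (f := consPrefix lam x hx n)
    (g := (consFactor lam x hx n).2.2) (f' := consSeg lam x hx m)
    (g' := x.edge m n (hmn ▸ le_self_add))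
    (by rw [consPrefix_comp, consSeg_comp_edge]) (by rw [d_consPrefix, d_consSeg, hmn])
  exact ⟨h, by rw [← hG]; simp⟩

theorem consPrefix_zero : ∃ h : a = (cons lam x hx).vert 0, consPrefix lam x hx 0 = eqToHom h := by
  obtain ⟨h, hG, -⟩ := KGraph.factor_eq (k := k) (f := 𝟙 a) (g := consSeg lam x hx 0)
    (f' := consPrefix lam x hx 0) (g' := (consFactor lam x hx 0).2.2)
    (by rw [consPrefix_comp, Category.id_comp]) (by rw [KGraph.d_id, d_consPrefix])
  exact ⟨h, by rw [← hG, Category.id_comp]⟩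

theorem cons_shift : (cons lam x hx).shift (KGraph.d (k := k) lam) = x := by
  refine ext_of_edge_zero (funext fun m => (consPrefix_eq_of_add_eq lam x hx rfl).choose)
    fun m => ?_
  obtain ⟨h0, hG0⟩ := consPrefix_eq_of_add_eq lam x hx (m := 0) rfl
  obtain ⟨hm, hGm⟩ := consPrefix_eq_of_add_eq lam x hx (m := m) rfl
  have hm0 : (0 : Fin k → ℕ) ≤ m := zero_le
  have hle := add_le_add hm0 (le_refl (KGraph.d (k := k) lam))
  have := consPrefix_comp_edge lam x hx hle
  rw [hG0, hGm, ← consSeg_comp_edge lam x hx hm0, Category.assoc, Category.assoc] at this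
  have hE := (KGraph.epi k (consSeg lam x hx 0)).left_cancellation _ _ this
  show (cons lam x hx).edge (0 + KGraph.d (k := k) lam) (m + KGraph.d (k := k) lam) hle ≫
    eqToHom hm = eqToHom h0 ≫ x.edge 0 m hm0
  rw [← cancel_epi (eqToHom h0.symm), ← Category.assoc, hE]
  simp

theorem cons_edge_zero_d_eq : ∃ (h0 : (cons lam x hx).vert 0 = a)
    (h1 : (cons lam x hx).vert (KGraph.d (k := k) lam) = b),
    (cons lam x hx).edge 0 (KGraph.d (k := k) lam) zero_le =
      eqToHom h0 ≫ lam ≫ eqToHom h1.symm := by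
  obtain ⟨h0, hG0⟩ := consPrefix_zero lam x hx
  obtain ⟨hp, hGp⟩ := consPrefix_eq_of_add_eq lam x hx (zero_add (KGraph.d (k := k) lam))
  have := consPrefix_comp_edge lam x hx (zero_le : 0 ≤ KGraph.d (k := k) lam)
  rw [hG0, hGp, eqToHom_comp_iff] at this
  refine ⟨h0.symm, hp.trans hx, ?_⟩
  rw [this]
  simp [consSeg, x.edge_self]

theorem eq_cons {y : InfPath k Λ} (hs : y.shift (KGraph.d (k := k) lam) = x)
    (h0 : y.vert 0 = a) (h1 : y.vert (KGraph.d (k := k) lam) = b)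
    (hy : y.edge 0 (KGraph.d (k := k) lam) zero_le = eqToHom h0 ≫ lam ≫ eqToHom h1.symm) :
    y = cons lam x hx := by
  subst hs
  have hseg : ∀ m, (eqToHom h0.symm ≫ y.edge 0 m zero_le) ≫
      y.edge m (m + KGraph.d (k := k) lam) le_self_add = consSeg lam _ hx m := by
    intro m
    rw [Category.assoc, y.edge_comp, ← y.edge_comp 0 (0 + KGraph.d (k := k) lam) _ zero_le
      (add_le_add zero_le le_rfl), ← y.edge_comp_eqToHom (zero_add _).symm zero_le, hy]
    simp [consSeg, shift]
  have hfac : ∀ m, ∃ h : y.vert m = (cons lam _ hx).vert m,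
      (eqToHom h0.symm ≫ y.edge 0 m zero_le) ≫ eqToHom h = consPrefix lam _ hx m := fun m =>
    (KGraph.factor_eq (k := k) (g' := (consFactor lam _ hx m).2.2)
      ((hseg m).trans (consPrefix_comp lam _ hx m).symm)
      (by rw [KGraph.d_comp, KGraph.d_eqToHom, y.deg, zero_add, tsub_zero]
          exact (d_consPrefix lam _ hx m).symm)).imp
        fun _ h => h.1
  choose hv hG using hfac
  refine ext_of_edge_zero (funext hv) fun m => ?_
  have := consPrefix_comp_edge lam _ hx (zero_le : 0 ≤ m)
  rw [← hG 0, ← hG m, y.edge_self] at this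
  rw [← cancel_epi (eqToHom h0.symm)]
  simpa using this.symm

end Cons

end InfPath

/-- Factorisation of infinite paths: given `λ ∈ Λ` and `x ∈ Λ^∞` with
`x(0) = s(λ)`, there is a unique `y ∈ Λ^∞` with `σ^{d(λ)} y = x` and
`y(0, d(λ)) = λ`. -/
theorem infPath_factorisation
    (k : ℕ) (Λ : Type u) [Category.{v} Λ] [KGraph k Λ]
    {a b : Λ} (lam : a ⟶ b) (x : InfPath k Λ) (hx : x.vert 0 = b) :
    ∃! y : InfPath k Λ, y.shift (KGraph.d (k := k) lam) = x ∧
      ∃ (h0 : y.vert 0 = a) (h1 : y.vert (KGraph.d (k := k) lam) = b),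
        y.edge 0 (KGraph.d (k := k) lam) zero_le =
          eqToHom h0 ≫ lam ≫ eqToHom h1.symm :=
  ⟨x.cons lam hx, ⟨x.cons_shift lam hx, x.cons_edge_zero_d_eq lam hx⟩,
    fun _ ⟨hs, h0, h1, hy⟩ => x.eq_cons lam hx hs h0 h1 hy⟩
end

section
/- Let Λ be a row-finite k-graph with no sources. In the topology on Λ^∞ generated by the cylinder sets Z(λ), each Z(λ) is compact; consequently Λ^∞ is compact if and only if Λ^0 is finite. -/
open CategoryTheory

universe v u

variable (k : ℕ) (Λ : Type u) [Category.{v} Λ] [KGraph k Λ]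

variable {k Λ}

/-- The cylinder set `Z(λ) = {x ∈ Λ^∞ : x(0, d λ) = λ}` of a morphism `λ : a ⟶ b`. -/
def Zset {k : ℕ} {Λ : Type u} [Category.{v} Λ] [KGraph k Λ] {a b : Λ} (f : a ⟶ b) :
    Set (InfPath k Λ) :=
  {x | ∃ (h0 : x.vert 0 = a) (h1 : x.vert (KGraph.d (k := k) f) = b),
    x.edge 0 (KGraph.d (k := k) f) zero_le = eqToHom h0 ≫ f ≫ eqToHom h1.symm}

/-- The cylinder-set topology on the infinite path space `Λ^∞`. -/
def pathTopology (k : ℕ) (Λ : Type u) [Category.{v} Λ] [KGraph k Λ] :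
    TopologicalSpace (InfPath k Λ) :=
  TopologicalSpace.generateFrom {S | ∃ (a b : Λ) (f : a ⟶ b), S = Zset f}

/-!
A point of `Z(λ)`, with `λ : a ⟶ b`, is determined by its initial segments `x(0, n) ∈ aΛ^n`,
which form a compatible family: `x(0, m)` is a prefix of `x(0, n)` whenever `m ≤ n`.
Conversely, by unique factorisation every compatible family comes from a unique infinite path.
Row-finiteness makes each `aΛ^n` finite, so the compatible families form a closed subset of a
compact product of finite discrete spaces; reconstruction is continuous on it, because membership
in a cylinder set depends on a single coordinate, and `Z(λ)` is the image of the closed set of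
families whose `d λ`-coordinate is `λ`. Finally `x ↦ x(0)` is continuous into the discrete space
`Λ^0`, with fibres `Z(v)`, and surjective because there are no sources: `Λ^∞` is then compact
exactly when `Λ^0` is finite.
-/

attribute [local instance] pathTopology

section SigmaHom

variable {C : Type*} [Category C]

theorem sigma_mk_eq_iff {a b a' b' : C} (g : a ⟶ b) (f : a' ⟶ b') :
    (⟨a, b, g⟩ : Σ (a b : C), a ⟶ b) = ⟨a', b', f⟩ ↔
      ∃ (h₀ : a = a') (h₁ : b = b'), g = eqToHom h₀ ≫ f ≫ eqToHom h₁.symm := by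
  constructor
  · rintro ⟨⟩
    exact ⟨rfl, rfl, by simp⟩
  · rintro ⟨rfl, rfl, rfl⟩
    simp

theorem sigma_mk_eq_of_id_comp {a b : C} {s : Σ c : C, a ⟶ c} (hs : s = ⟨a, 𝟙 a⟩) {g : s.1 ⟶ b}
    {f : a ⟶ b} (h : s.2 ≫ g = f) : (⟨s.1, b, g⟩ : Σ (a b : C), a ⟶ b) = ⟨a, b, f⟩ := by
  subst hs
  rw [← h]
  exact congrArg (fun g => (⟨a, b, g⟩ : Σ (a b : C), a ⟶ b)) (Category.id_comp g).symm

end SigmaHom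

theorem KGraph.cancel_left {k : ℕ} {Λ : Type u} [Category.{v} Λ] [KGraph k Λ] {a b c : Λ}
    (g : a ⟶ b) {h h' : b ⟶ c} (e : g ≫ h = g ≫ h') : h = h' := by
  have hd : KGraph.d (k := k) h' = KGraph.d (k := k) h := by
    simpa only [KGraph.d_comp, add_right_inj] using (congrArg (KGraph.d (k := k)) e).symm
  obtain ⟨_, _, huniq⟩ := KGraph.factor (k := k) (g ≫ h) _ _ (KGraph.d_comp g h)
  have := (huniq ⟨b, g, h⟩ ⟨rfl, rfl, rfl⟩).trans (huniq ⟨b, g, h'⟩ ⟨rfl, hd, e.symm⟩).symm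
  simpa using this

namespace KGraph

variable {k : ℕ} {Λ : Type u} [Category.{v} Λ] [KGraph k Λ]

local notation "𝐝" => KGraph.d (k := k)

theorem d_right_eq_sub {a b c : Λ} {g : a ⟶ b} {h : b ⟶ c} {f : a ⟶ c} (e : g ≫ h = f) :
    𝐝 h = 𝐝 f - 𝐝 g := by
  rw [← e, d_comp, add_tsub_cancel_left]

def IsPrefix {a : Λ} (s t : Σ c : Λ, a ⟶ c) : Prop :=
  ∃ g : s.1 ⟶ t.1, s.2 ≫ g = t.2

theorem isPrefix_refl {a : Λ} (t : Σ c : Λ, a ⟶ c) : IsPrefix t t :=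
  ⟨𝟙 _, Category.comp_id _⟩

theorem IsPrefix.trans {a : Λ} {s t w : Σ c : Λ, a ⟶ c} (hst : IsPrefix s t)
    (htw : IsPrefix t w) : IsPrefix s w := by
  obtain ⟨g, hg⟩ := hst
  obtain ⟨h, hh⟩ := htw
  exact ⟨g ≫ h, by rw [← Category.assoc, hg, hh]⟩

theorem exists_isPrefix_d_eq {a : Λ} (t : Σ c : Λ, a ⟶ c) {m : Fin k → ℕ} (hm : m ≤ 𝐝 t.2) :
    ∃ s, IsPrefix s t ∧ 𝐝 s.2 = m := by
  obtain ⟨⟨c, g, h⟩, ⟨hg, -, hgh⟩, -⟩ := factor t.2 m (𝐝 t.2 - m) (add_tsub_cancel_of_le hm).symm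
  exact ⟨⟨c, g⟩, ⟨h, hgh⟩, hg⟩

theorem IsPrefix.eq_of_d_eq {a : Λ} {s s' t : Σ c : Λ, a ⟶ c} (hs : IsPrefix s t)
    (hs' : IsPrefix s' t) (hd : 𝐝 s.2 = 𝐝 s'.2) : s = s' := by
  obtain ⟨h, hh⟩ := hs
  obtain ⟨h', hh'⟩ := hs'
  have hdh : 𝐝 h' = 𝐝 h := by rw [d_right_eq_sub hh, d_right_eq_sub hh', hd]
  obtain ⟨_, _, huniq⟩ := factor t.2 (𝐝 s.2) (𝐝 h) (by rw [← hh, d_comp])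
  have := (huniq ⟨_, s.2, h⟩ ⟨rfl, rfl, hh⟩).trans (huniq ⟨_, s'.2, h'⟩ ⟨hd.symm, hdh, hh'⟩).symm
  exact congrArg (fun r : Σ c : Λ, (a ⟶ c) × (c ⟶ t.1) => (⟨r.1, r.2.1⟩ : Σ c : Λ, a ⟶ c)) this

theorem eq_id_of_d_eq_zero {a : Λ} {s : Σ c : Λ, a ⟶ c} (hs : 𝐝 s.2 = 0) : s = ⟨a, 𝟙 a⟩ :=
  (isPrefix_refl s).eq_of_d_eq ⟨s.2, Category.id_comp _⟩ (hs.trans (d_id a).symm)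

/-- The paper's `aΛ^n`. -/
abbrev PathsFrom (k : ℕ) [KGraph k Λ] (a : Λ) (n : Fin k → ℕ) : Type (max u v) :=
  {t : Σ c : Λ, a ⟶ c // KGraph.d (k := k) t.2 = n}

instance {a : Λ} {n : Fin k → ℕ} : TopologicalSpace (PathsFrom k a n) := ⊥

instance {a : Λ} {n : Fin k → ℕ} : DiscreteTopology (PathsFrom k a n) := ⟨rfl⟩

def compatibleFamilies (k : ℕ) [KGraph k Λ] (a : Λ) : Set (∀ n, PathsFrom k a n) :=
  {p | ∀ m n, m ≤ n → IsPrefix (p m).1 (p n).1}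

theorem isClosed_compatibleFamilies (a : Λ) : IsClosed (compatibleFamilies k a) := by
  simp only [compatibleFamilies, Set.ofPred_forall]
  exact isClosed_iInter fun m => isClosed_iInter fun n => isClosed_iInter fun _ =>
    (isClosed_discrete {u : PathsFrom k a m × PathsFrom k a n | IsPrefix u.1.1 u.2.1}).preimage
      ((continuous_apply m).prodMk (continuous_apply n))

theorem exists_isPrefix_chain (hns : ∀ w : Λ, ∃ t : Σ c : Λ, w ⟶ c, 𝐝 t.2 = 1) (v : Λ) :
    ∃ T : ℕ → Σ c : Λ, v ⟶ c, (∀ N, 𝐝 (T N).2 = N) ∧ ∀ N M, N ≤ M → IsPrefix (T N) (T M) := by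
  choose e he using hns
  let T : ℕ → Σ c : Λ, v ⟶ c := fun N => N.rec ⟨v, 𝟙 v⟩ fun _ t => ⟨(e t.1).1, t.2 ≫ (e t.1).2⟩
  refine ⟨T, fun N => ?_, fun N M hNM => ?_⟩
  · induction N with
    | zero => exact (d_id v).trans Nat.cast_zero.symm
    | succ N ih =>
      change 𝐝 ((T N).2 ≫ (e (T N).1).2) = _
      rw [d_comp, ih, he, Nat.cast_succ]
  · induction hNM with
    | refl => exact isPrefix_refl _
    | step _ ih => exact ih.trans ⟨_, rfl⟩

theorem exists_mem_compatibleFamilies (hns : ∀ w : Λ, ∃ t : Σ c : Λ, w ⟶ c, 𝐝 t.2 = 1)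
    (v : Λ) : ∃ p, p ∈ compatibleFamilies k v := by
  obtain ⟨T, hTd, hT⟩ := exists_isPrefix_chain hns v
  have hle (n : Fin k → ℕ) : n ≤ 𝐝 (T (Finset.univ.sup n)).2 := fun i => by
    simpa [hTd] using Finset.le_sup (f := n) (Finset.mem_univ i)
  -- Cutting every degree-`n` segment out of one long path `T N` makes the cuts compatible.
  choose s hs hsd using fun n => exists_isPrefix_d_eq _ (hle n)
  refine ⟨fun n => ⟨s n, hsd n⟩, fun m n hmn => ?_⟩
  obtain ⟨r, hr, hrd⟩ := exists_isPrefix_d_eq (s n) (hmn.trans (hsd n).ge)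
  have hTmn := hT (Finset.univ.sup m) _ (Finset.sup_mono_fun fun i _ => hmn i)
  have : s m = r := ((hs m).trans hTmn).eq_of_d_eq (hr.trans (hs n)) ((hsd m).trans hrd.symm)
  change IsPrefix (s m) (s n)
  exact this ▸ hr

end KGraph

namespace InfPath

open KGraph

variable {k : ℕ} {Λ : Type u} [Category.{v} Λ] [KGraph k Λ]

local notation "𝐝" => KGraph.d (k := k)

theorem mem_Zset_iff {a b : Λ} (f : a ⟶ b) (x : InfPath k Λ) :
    x ∈ Zset f ↔
      (⟨x.vert 0, x.vert (𝐝 f), x.edge 0 (𝐝 f) zero_le⟩ : Σ (a b : Λ), a ⟶ b) = ⟨a, b, f⟩ :=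
  (sigma_mk_eq_iff _ _).symm

theorem mem_Zset_id_iff (x : InfPath k Λ) (w : Λ) : x ∈ Zset (𝟙 w) ↔ x.vert 0 = w := by
  have hid : ∀ n (hn : n = 0), (⟨x.vert 0, x.vert n, x.edge 0 n zero_le⟩ : Σ (a b : Λ), a ⟶ b) =
      ⟨x.vert 0, x.vert 0, 𝟙 _⟩ := by
    rintro _ rfl
    rw [x.edge_self]
  rw [mem_Zset_iff, hid _ (d_id w)]
  constructor
  · exact congrArg Sigma.fst
  · rintro rfl
    rfl

theorem isOpen_Zset {a b : Λ} (f : a ⟶ b) : IsOpen (Zset (k := k) f) :=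
  TopologicalSpace.isOpen_generateFrom_of_mem ⟨a, b, f, rfl⟩

def segments (x : InfPath k Λ) (n : Fin k → ℕ) : PathsFrom k (x.vert 0) n :=
  ⟨⟨x.vert n, x.edge 0 n zero_le⟩, by rw [x.deg, tsub_zero]⟩

theorem segments_mem (x : InfPath k Λ) : x.segments ∈ compatibleFamilies k (x.vert 0) :=
  fun m n h => ⟨x.edge m n h, x.edge_comp _ _ _ _ _⟩

variable {a : Λ}

noncomputable def ofFamily (p : ∀ n, PathsFrom k a n) (hp : p ∈ compatibleFamilies k a) :
    InfPath k Λ where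
  vert n := (p n).1.1
  edge m n h := (hp m n h).choose
  edge_self m := cancel_left (k := k) (p m).1.2 <| by
    rw [(hp m m le_rfl).choose_spec, Category.comp_id]
  edge_comp m n q h₁ h₂ := cancel_left (k := k) (p m).1.2 <| by
    rw [← Category.assoc, (hp m n h₁).choose_spec, (hp n q h₂).choose_spec,
      (hp m q (h₁.trans h₂)).choose_spec]
  deg m n h := by rw [d_right_eq_sub (hp m n h).choose_spec, (p n).2, (p m).2]

theorem comp_ofFamily_edge (p : ∀ n, PathsFrom k a n) (hp : p ∈ compatibleFamilies k a)
    (m n : Fin k → ℕ) (h : m ≤ n) : (p m).1.2 ≫ (ofFamily p hp).edge m n h = (p n).1.2 :=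
  (hp m n h).choose_spec

theorem ofFamily_vert_zero (p : ∀ n, PathsFrom k a n) (hp : p ∈ compatibleFamilies k a) :
    (ofFamily p hp).vert 0 = a :=
  congrArg Sigma.fst (eq_id_of_d_eq_zero (p 0).2)

theorem ofFamily_segments (x : InfPath k Λ) : ofFamily x.segments x.segments_mem = x := by
  have hedge (m n : Fin k → ℕ) (h : m ≤ n) :
      (ofFamily x.segments x.segments_mem).edge m n h = x.edge m n h :=
    cancel_left (k := k) (x.edge 0 m zero_le) <|
      (comp_ofFamily_edge x.segments x.segments_mem m n h).trans (x.edge_comp 0 m n zero_le h).symm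
  cases x
  unfold ofFamily at hedge ⊢
  congr 1
  funext m n h
  exact hedge m n h

theorem ofFamily_mem_Zset_iff (p : ∀ n, PathsFrom k a n) (hp : p ∈ compatibleFamilies k a)
    {c e : Λ} (g : c ⟶ e) :
    ofFamily p hp ∈ Zset g ↔ (⟨a, (p (𝐝 g)).1⟩ : Σ (a b : Λ), a ⟶ b) = ⟨c, e, g⟩ := by
  rw [mem_Zset_iff]
  exact iff_of_eq (congrArg (· = _) (sigma_mk_eq_of_id_comp (eq_id_of_d_eq_zero (p 0).2)
    (comp_ofFamily_edge p hp 0 _ zero_le)))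

noncomputable abbrev ofFamilyMap (k : ℕ) [KGraph k Λ] (a : Λ) :
    compatibleFamilies k a → InfPath k Λ :=
  fun q => ofFamily q.1 q.2

theorem isClopen_preimage_ofFamilyMap_Zset {c e : Λ} (g : c ⟶ e) :
    IsClopen (ofFamilyMap k a ⁻¹' Zset g) := by
  have : ofFamilyMap k a ⁻¹' Zset g = (fun q => q.1 (𝐝 g)) ⁻¹'
      {t | (⟨a, t.1⟩ : Σ (a b : Λ), a ⟶ b) = ⟨c, e, g⟩} :=
    Set.ext fun q => ofFamily_mem_Zset_iff q.1 q.2 g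
  rw [this]
  exact (isClopen_discrete _).preimage ((continuous_apply _).comp continuous_subtype_val)

theorem continuous_ofFamilyMap : Continuous (ofFamilyMap k a) :=
  continuous_generateFrom_iff.2 fun _ ⟨_, _, g, hS⟩ =>
    hS ▸ (isClopen_preimage_ofFamilyMap_Zset g).isOpen

theorem Zset_subset_range_ofFamilyMap {b : Λ} (f : a ⟶ b) :
    Zset f ⊆ Set.range (ofFamilyMap k a) := by
  rintro x ⟨rfl, -, -⟩
  exact ⟨⟨x.segments, x.segments_mem⟩, ofFamily_segments x⟩

theorem isCompact_Zset [∀ n, Finite (PathsFrom k a n)] {b : Λ} (f : a ⟶ b) :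
    IsCompact (Zset (k := k) f) := by
  have : CompactSpace (compatibleFamilies k a) :=
    isCompact_iff_compactSpace.mp (isClosed_compatibleFamilies a).isCompact
  rw [← Set.image_preimage_eq_of_subset (Zset_subset_range_ofFamilyMap f)]
  exact (isClopen_preimage_ofFamilyMap_Zset f).isClosed.isCompact.image continuous_ofFamilyMap

theorem surjective_vert_zero (hns : ∀ w : Λ, ∃ t : Σ c : Λ, w ⟶ c, 𝐝 t.2 = 1) :
    Function.Surjective fun x : InfPath k Λ => x.vert 0 := fun v =>
  let ⟨p, hp⟩ := exists_mem_compatibleFamilies hns v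
  ⟨ofFamily p hp, ofFamily_vert_zero p hp⟩

end InfPath

open InfPath in
/-- In a row-finite `k`-graph with no sources, each cylinder set `Z(λ)` is compact
in the cylinder-set topology on `Λ^∞`; consequently `Λ^∞` is compact iff `Λ^0` is
finite. -/
theorem cylinder_sets_compact
    (k : ℕ) (Λ : Type u) [Category.{v} Λ] [KGraph k Λ]
    (hrowfin : ∀ (v : Λ) (n : Fin k → ℕ),
      {t : Σ b : Λ, v ⟶ b | KGraph.d (k := k) t.2 = n}.Finite)
    (hnosource : ∀ (v : Λ) (n : Fin k → ℕ),
      {t : Σ b : Λ, v ⟶ b | KGraph.d (k := k) t.2 = n}.Nonempty) :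
    (∀ {a b : Λ} (f : a ⟶ b), @IsCompact _ (pathTopology k Λ) (Zset f)) ∧
      (@CompactSpace _ (pathTopology k Λ) ↔ Finite Λ) := by
  have hZ {a b : Λ} (f : a ⟶ b) : IsCompact (Zset (k := k) f) :=
    have : ∀ n, Finite (KGraph.PathsFrom k a n) := fun n => (hrowfin a n).to_subtype
    isCompact_Zset f
  let _ : TopologicalSpace Λ := ⊥
  have : DiscreteTopology Λ := ⟨rfl⟩
  have hcont : Continuous fun x : InfPath k Λ => x.vert 0 := continuous_discrete_rng.2 fun w => by
    convert isOpen_Zset (k := k) (𝟙 w)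
    exact Set.ext fun x => (mem_Zset_id_iff x w).symm
  refine ⟨hZ, fun _ => ?_, fun _ => ⟨?_⟩⟩
  · have := (surjective_vert_zero fun w => hnosource w 1).compactSpace hcont
    exact finite_of_compact_of_discrete
  · rw [show Set.univ = ⋃ w : Λ, Zset (k := k) (𝟙 w) by ext; simp [mem_Zset_id_iff]]
    exact isCompact_iUnion fun w => hZ (𝟙 w)
end
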